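/- For every k ∈ (0,1), h(k) := (2k²−1)E(k) + (1−k²)(1+8k²)K(k) > 0. Consequently g(k) = 6E(k) + (8k²−7)K(k) is strictly increasing on (0,1). -/
import Mathlib


open Real

/-- The complete elliptic integral of the first kind. -/
noncomputable def ellipticK (k : ℝ) : ℝ :=
  ∫ θ in (0:ℝ)..(π / 2), 1 / Real.sqrt (1 - k ^ 2 * Real.sin θ ^ 2)

/-- The complete elliptic integral of the second kind. -/
noncomputable def ellipticE (k : ℝ) : ℝ :=
  ∫ θ in (0:ℝ)..(π / 2), Real.sqrt (1 - k ^ 2 * Real.sin θ ^ 2)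

lemma aux_base_pos (k θ : ℝ) (hk1 : k < 1) (hk0 : 0 ≤ k) :
    0 < 1 - k ^ 2 * Real.sin θ ^ 2 := by
  nlinarith [Real.sin_sq_le_one θ, sq_nonneg (Real.sin θ), sq_nonneg k]

lemma aux_sqrt_pos (k θ : ℝ) (hk1 : k < 1) (hk0 : 0 ≤ k) :
    0 < Real.sqrt (1 - k ^ 2 * Real.sin θ ^ 2) :=
  Real.sqrt_pos.mpr (aux_base_pos k θ hk1 hk0)

lemma aux_cont (k a b : ℝ) (hk1 : k < 1) (hk0 : 0 ≤ k) :
    Continuous (fun θ : ℝ =>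
      a * Real.sqrt (1 - k ^ 2 * Real.sin θ ^ 2)
        + b / Real.sqrt (1 - k ^ 2 * Real.sin θ ^ 2)) := by
  have hc : Continuous fun θ : ℝ => Real.sqrt (1 - k ^ 2 * Real.sin θ ^ 2) :=
    Real.continuous_sqrt.comp
      (continuous_const.sub (continuous_const.mul (Real.continuous_sin.pow 2)))
  exact (continuous_const.mul hc).add
    (continuous_const.div hc (fun θ => (aux_sqrt_pos k θ hk1 hk0).ne'))

lemma aux_comb (k a b : ℝ) (hk1 : k < 1) (hk0 : 0 ≤ k) :
    a * ellipticE k + b * ellipticK k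
      = ∫ θ in (0:ℝ)..(π / 2),
          (a * Real.sqrt (1 - k ^ 2 * Real.sin θ ^ 2)
            + b / Real.sqrt (1 - k ^ 2 * Real.sin θ ^ 2)) := by
  have hc : Continuous fun θ : ℝ => Real.sqrt (1 - k ^ 2 * Real.sin θ ^ 2) :=
    Real.continuous_sqrt.comp
      (continuous_const.sub (continuous_const.mul (Real.continuous_sin.pow 2)))
  have h1 : IntervalIntegrable
      (fun θ : ℝ => a * Real.sqrt (1 - k ^ 2 * Real.sin θ ^ 2)) MeasureTheory.volume 0 (π/2) :=
    (continuous_const.mul hc).intervalIntegrable _ _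
  have h2 : IntervalIntegrable
      (fun θ : ℝ => b / Real.sqrt (1 - k ^ 2 * Real.sin θ ^ 2)) MeasureTheory.volume 0 (π/2) :=
    (continuous_const.div hc (fun θ => (aux_sqrt_pos k θ hk1 hk0).ne')).intervalIntegrable _ _
  rw [intervalIntegral.integral_add h1 h2]
  unfold ellipticE ellipticK
  rw [← intervalIntegral.integral_const_mul, ← intervalIntegral.integral_const_mul]
  congr 1
  refine intervalIntegral.integral_congr fun θ _ => ?_
  rw [mul_one_div]

lemma aux_pt1 (k θ : ℝ) (hk0 : 0 < k) (hk1 : k < 1) :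
    0 < (2 * k ^ 2 - 1) * Real.sqrt (1 - k ^ 2 * Real.sin θ ^ 2)
        + (1 - k ^ 2) * (1 + 8 * k ^ 2) / Real.sqrt (1 - k ^ 2 * Real.sin θ ^ 2) := by
  set t := Real.sqrt (1 - k ^ 2 * Real.sin θ ^ 2) with ht_def
  have ht : 0 < t := aux_sqrt_pos k θ hk1 hk0.le
  have ht2 : t ^ 2 = 1 - k ^ 2 * Real.sin θ ^ 2 :=
    Real.sq_sqrt (aux_base_pos k θ hk1 hk0.le).le
  have hs0 : (0:ℝ) ≤ Real.sin θ ^ 2 := sq_nonneg _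
  have hs1 : Real.sin θ ^ 2 ≤ 1 := Real.sin_sq_le_one θ
  have key : 0 < (2 * k ^ 2 - 1) * t ^ 2 + (1 - k ^ 2) * (1 + 8 * k ^ 2) := by
    rw [ht2]
    nlinarith [mul_pos hk0 hk0, sq_nonneg k, mul_nonneg (mul_nonneg hk0.le hk0.le) hs0,
      mul_pos (mul_pos hk0 hk0) (show (0:ℝ) < 1 - k ^ 2 by nlinarith),
      mul_nonneg (mul_nonneg (mul_nonneg hk0.le hk0.le) hs0) (sq_nonneg k)]
  have heq : (2 * k ^ 2 - 1) * t + (1 - k ^ 2) * (1 + 8 * k ^ 2) / t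
      = ((2 * k ^ 2 - 1) * t ^ 2 + (1 - k ^ 2) * (1 + 8 * k ^ 2)) / t := by
    field_simp
  rw [heq]
  exact div_pos key ht

lemma aux_pt2 (k₁ k₂ θ : ℝ) (h0 : 0 < k₁) (h12 : k₁ < k₂) (h2 : k₂ < 1) :
    0 < (6 * Real.sqrt (1 - k₂ ^ 2 * Real.sin θ ^ 2)
          + (8 * k₂ ^ 2 - 7) / Real.sqrt (1 - k₂ ^ 2 * Real.sin θ ^ 2))
        - (6 * Real.sqrt (1 - k₁ ^ 2 * Real.sin θ ^ 2)
          + (8 * k₁ ^ 2 - 7) / Real.sqrt (1 - k₁ ^ 2 * Real.sin θ ^ 2)) := by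
  have hk10 : (0:ℝ) ≤ k₁ := h0.le
  have hk11 : k₁ < 1 := h12.trans h2
  set s := Real.sin θ ^ 2 with hs_def
  set t₁ := Real.sqrt (1 - k₁ ^ 2 * s) with ht1_def
  set t₂ := Real.sqrt (1 - k₂ ^ 2 * s) with ht2_def
  have ht1 : 0 < t₁ := aux_sqrt_pos k₁ θ hk11 hk10
  have ht2 : 0 < t₂ := aux_sqrt_pos k₂ θ h2 (h0.trans h12).le
  have ht1sq : t₁ ^ 2 = 1 - k₁ ^ 2 * s := Real.sq_sqrt (aux_base_pos k₁ θ hk11 hk10).le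
  have ht2sq : t₂ ^ 2 = 1 - k₂ ^ 2 * s := Real.sq_sqrt (aux_base_pos k₂ θ h2 (h0.trans h12).le).le
  have hs0 : (0:ℝ) ≤ s := sq_nonneg _
  have hs1 : s ≤ 1 := Real.sin_sq_le_one θ
  set N := 6 * t₁ * t₂ ^ 2 + (8 * k₂ ^ 2 - 7) * t₁ - 6 * t₁ ^ 2 * t₂ - (8 * k₁ ^ 2 - 7) * t₂
    with hN_def
  have hid : N * (t₁ + t₂)
      = (k₂ ^ 2 - k₁ ^ 2) * (8 - 7 * s + (8 - 6 * s) * (t₁ * t₂)) := by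
    rw [hN_def]
    linear_combination (6 * t₁ * t₂ - (8 * k₁ ^ 2 - 7)) * ht2sq
      + (-(6 * t₁ * t₂) + (8 * k₂ ^ 2 - 7)) * ht1sq
  have hfac : 0 < 8 - 7 * s + (8 - 6 * s) * (t₁ * t₂) := by
    nlinarith [mul_pos ht1 ht2]
  have hd : 0 < k₂ ^ 2 - k₁ ^ 2 := by nlinarith
  have hNmul : 0 < N * (t₁ + t₂) := by rw [hid]; exact mul_pos hd hfac
  have hN : 0 < N := by
    rcases mul_pos_iff.mp hNmul with ⟨h, _⟩ | ⟨_, h⟩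
    · exact h
    · linarith
  have heq : (6 * t₂ + (8 * k₂ ^ 2 - 7) / t₂) - (6 * t₁ + (8 * k₁ ^ 2 - 7) / t₁)
      = N / (t₁ * t₂) := by
    rw [hN_def]; field_simp; ring
  rw [heq]
  exact div_pos hN (mul_pos ht1 ht2)

theorem h_pos_and_g_strictMono :
    (∀ k ∈ Set.Ioo (0:ℝ) 1,
      0 < (2 * k ^ 2 - 1) * ellipticE k + (1 - k ^ 2) * (1 + 8 * k ^ 2) * ellipticK k) ∧
    StrictMonoOn (fun k => 6 * ellipticE k + (8 * k ^ 2 - 7) * ellipticK k)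
      (Set.Ioo (0:ℝ) 1) := by
  constructor
  · rintro k ⟨hk0, hk1⟩
    rw [aux_comb k _ _ hk1 hk0.le]
    exact intervalIntegral.intervalIntegral_pos_of_pos
      ((aux_cont k _ _ hk1 hk0.le).intervalIntegrable _ _)
      (fun θ => aux_pt1 k θ hk0 hk1) (by positivity)
  · rintro a ⟨ha0, ha1⟩ b ⟨hb0, hb1⟩ hab
    simp only
    rw [aux_comb a _ _ ha1 ha0.le, aux_comb b _ _ hb1 hb0.le]
    rw [← sub_pos, ← intervalIntegral.integral_sub
      ((aux_cont b _ _ hb1 hb0.le).intervalIntegrable _ _)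
      ((aux_cont a _ _ ha1 ha0.le).intervalIntegrable _ _)]
    exact intervalIntegral.intervalIntegral_pos_of_pos
      (((aux_cont b _ _ hb1 hb0.le).sub (aux_cont a _ _ ha1 ha0.le)).intervalIntegrable _ _)
      (fun θ => aux_pt2 a b θ ha0 hab hb1) (by positivity)
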